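/- Let T be a tree and v a vertex belonging to the N-forest F_N(T) (i.e., v ∉ N[Supp(T)]). Then there exist maximum independent sets I_1 and I_2 of T with v ∈ I_1 and v ∉ I_2. -/

import Mathlib

open SimpleGraph Matrix

attribute [local instance] Classical.propDecidable

noncomputable section

variable {V : Type*}

/-- A graph is singular if its adjacency matrix (over ℝ) has nontrivial kernel. -/
def IsSingular [Fintype V] (G : SimpleGraph V) : Prop :=
  ∃ x : V → ℝ, x ≠ 0 ∧ G.adjMatrix ℝ *ᵥ x = 0

/-- The support of the null space of the adjacency matrix. -/
def nullSupp [Fintype V] (G : SimpleGraph V) : Set V :=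
  {v | ∃ x : V → ℝ, G.adjMatrix ℝ *ᵥ x = 0 ∧ x v ≠ 0}

/-- The core: all neighbours of supported vertices. -/
def core [Fintype V] (G : SimpleGraph V) : Set V :=
  ⋃ v ∈ nullSupp G, G.neighborSet v

/-- Vertex set of the N-forest: complement of the closed neighbourhood of the support. -/
def fnVerts [Fintype V] (G : SimpleGraph V) : Set V :=
  (nullSupp G ∪ core G)ᶜ

/-- A matching as a set of pairwise disjoint edges of `G`. -/
def IsMatchingSet (G : SimpleGraph V) (M : Set (Sym2 V)) : Prop :=
  M ⊆ G.edgeSet ∧ M.Pairwise fun e f => ∀ v : V, ¬(v ∈ e ∧ v ∈ f)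

/-- `M` saturates `v`. -/
def Saturates (M : Set (Sym2 V)) (v : V) : Prop := ∃ e ∈ M, v ∈ e

/-- A perfect matching saturates every vertex. -/
def IsPerfectMatchingSet (G : SimpleGraph V) (M : Set (Sym2 V)) : Prop :=
  IsMatchingSet G M ∧ ∀ v : V, Saturates M v

/-- Matching number. -/
def matchNum [Fintype V] (G : SimpleGraph V) : ℕ :=
  sSup {n | ∃ M : Set (Sym2 V), IsMatchingSet G M ∧ M.ncard = n}

/-- Maximum matchings. -/
def IsMaxMatching [Fintype V] (G : SimpleGraph V) (M : Set (Sym2 V)) : Prop :=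
  IsMatchingSet G M ∧ M.ncard = matchNum G

/-- Independent set of vertices. -/
def IsIndepSet (G : SimpleGraph V) (I : Set V) : Prop :=
  I.Pairwise fun a b => ¬ G.Adj a b

/-- Independence number. -/
def indepNum [Fintype V] (G : SimpleGraph V) : ℕ :=
  sSup {n | ∃ I : Set V, _root_.IsIndepSet G I ∧ I.ncard = n}

/-- Maximum independent sets. -/
def IsMaxIndep [Fintype V] (G : SimpleGraph V) (I : Set V) : Prop :=
  _root_.IsIndepSet G I ∧ I.ncard = _root_.indepNum G

/-- The graph `G` with all vertices in `S` deleted (kept as isolated vertices). -/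
def avoid (G : SimpleGraph V) (S : Set V) : SimpleGraph V where
  Adj a b := G.Adj a b ∧ a ∉ S ∧ b ∉ S
  symm := ⟨fun a b h => ⟨h.1.symm, h.2.2, h.2.1⟩⟩
  loopless := ⟨fun a h => G.loopless.irrefl a h.1⟩

/-- `G` is unicyclic: connected with as many edges as vertices. -/
def IsUnicyclic [Fintype V] (G : SimpleGraph V) : Prop :=
  G.Connected ∧ G.edgeFinset.card = Fintype.card V

/-- `C` is the vertex set of the (unique) cycle of `G`:
the induced subgraph on `C` is connected and 2-regular. -/
def IsCycleVerts [Fintype V] (G : SimpleGraph V) (C : Set V) : Prop :=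
  C.Nonempty ∧ (G.induce C).Connected ∧ ∀ v : C, (G.induce C).degree v = 2

/-- Vertices of the pendant tree of `G` at the cycle vertex `v`: all vertices
reachable from `v` after deleting the other cycle vertices. -/
def pendantVerts (G : SimpleGraph V) (C : Set V) (v : V) : Set V :=
  {u | (avoid G (C \ {v})).Reachable v u}

lemma mem_pendantVerts_self (G : SimpleGraph V) (C : Set V) (v : V) :
    v ∈ pendantVerts G C v := Reachable.refl v

/-- The pendant tree of `G` at `v` (as an induced subgraph). -/
def pendantTree (G : SimpleGraph V) (C : Set V) (v : V) :
    SimpleGraph (pendantVerts G C v) := G.induce (pendantVerts G C v)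

/-- The rest of the graph, `G − G{v}`. -/
def pendantRest (G : SimpleGraph V) (C : Set V) (v : V) :
    SimpleGraph ((pendantVerts G C v)ᶜ : Set V) := G.induce (pendantVerts G C v)ᶜ

/-- `v` is matched in a graph `H`: every maximum matching of `H` saturates `v`. -/
def MatchedIn {W : Type*} [Fintype W] (H : SimpleGraph W) (w : W) : Prop :=
  ∀ M : Set (Sym2 W), IsMaxMatching H M → Saturates M w

/-- A unicyclic graph is of Type I if some cycle vertex is matched in its pendant tree. -/
def TypeI [Fintype V] (G : SimpleGraph V) (C : Set V) : Prop :=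
  ∃ v ∈ C, MatchedIn (pendantTree G C v) ⟨v, mem_pendantVerts_self G C v⟩

/-- Type II: every cycle vertex is missed by some maximum matching of its pendant tree. -/
def TypeII [Fintype V] (G : SimpleGraph V) (C : Set V) : Prop :=
  ∀ v ∈ C, ¬ MatchedIn (pendantTree G C v) ⟨v, mem_pendantVerts_self G C v⟩

end

/-! For a forest, isolating a leaf and its neighbour raises `α` by one and the nullity `η` of the
adjacency matrix by two, so `2 α(G) = n + η(G)`. If `w ∉ Supp(G)`, isolating `w` strictly enlarges
the kernel (it gains `e_w`), hence raises `α`, so some maximum independent set avoids `w`.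

For `v ∈ F_N(T)` this applies to `v` and to every neighbour of `v`. Suppose no maximum independent
set contains `v`, and pick one, `I`, meeting `N(v)` in as few vertices as possible. It meets
`N(v)`, say in `u`, since otherwise `I ∪ {v}` would be larger. Replacing `I` on `u`'s side of the
edge `vu` by a maximum independent set avoiding `u` gives a maximum independent set meeting
`N(v)` in fewer vertices. -/

section IndependentSets

variable {V : Type*} {G : SimpleGraph V}

theorem IsIndepSet.insert {I : Set V} {a : V} (hI : _root_.IsIndepSet G I)
    (ha : ∀ b ∈ I, ¬ G.Adj a b) : _root_.IsIndepSet G (insert a I) := by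
  rintro x (rfl | hx) y (rfl | hy) hxy
  · exact absurd rfl hxy
  · exact ha y hy
  · exact fun h => ha x hx h.symm
  · exact hI hx hy hxy

theorem IsIndepSet.avoid_union {I : Set V} (hI : _root_.IsIndepSet G I) (S : Set V) :
    _root_.IsIndepSet (avoid G S) (I ∪ S) := by
  rintro a (ha | ha) b (hb | hb) hab ⟨hadj, haS, hbS⟩
  exacts [hI ha hb hab hadj, hbS hb, haS ha, haS ha]

theorem IsIndepSet.diff_of_avoid {I S : Set V} (hI : _root_.IsIndepSet (avoid G S) I) :
    _root_.IsIndepSet G (I \ S) :=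
  fun _ ha _ hb hab hadj => hI ha.1 hb.1 hab ⟨hadj, ha.2, hb.2⟩

theorem IsIndepSet.diff_union_inter {I J S : Set V} {v : V} (hI : _root_.IsIndepSet G I)
    (hJ : _root_.IsIndepSet G J) (hvI : v ∉ I)
    (hS : ∀ a ∈ S, ∀ b, G.Adj a b → b ≠ v → b ∈ S) :
    _root_.IsIndepSet G ((I \ S) ∪ (J ∩ S)) := by
  have cross : ∀ a ∈ I \ S, ∀ b ∈ J ∩ S, ¬ G.Adj b a := fun a ha b hb hba =>
    ha.2 (hS b hb.2 a hba fun hav => hvI (hav ▸ ha.1))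
  rintro a (ha | ha) b (hb | hb) hab
  exacts [hI ha.1 hb.1 hab, fun h => cross a ha b hb h.symm, cross b hb a ha,
    hJ ha.1 hb.1 hab]

end IndependentSets

section IndependenceNumber

variable {V : Type*} [Fintype V] {G : SimpleGraph V}

theorem bddAbove_indepSet_ncard (G : SimpleGraph V) :
    BddAbove {n | ∃ I : Set V, _root_.IsIndepSet G I ∧ I.ncard = n} :=
  ⟨Nat.card V, by rintro n ⟨I, -, rfl⟩; exact Set.ncard_le_card I⟩

theorem IsIndepSet.ncard_le_indepNum {I : Set V} (hI : _root_.IsIndepSet G I) :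
    I.ncard ≤ _root_.indepNum G :=
  le_csSup (bddAbove_indepSet_ncard G) ⟨I, hI, rfl⟩

theorem exists_isMaxIndep (G : SimpleGraph V) : ∃ I : Set V, IsMaxIndep G I := by
  obtain ⟨I, hI, hcard⟩ :=
    Nat.sSup_mem (s := {n | ∃ I : Set V, _root_.IsIndepSet G I ∧ I.ncard = n})
      ⟨0, ∅, Set.pairwise_empty _, Set.ncard_empty V⟩ (bddAbove_indepSet_ncard G)
  exact ⟨I, hI, hcard⟩

theorem IsIndepSet.isMaxIndep {I : Set V} (hI : _root_.IsIndepSet G I)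
    (hcard : _root_.indepNum G ≤ I.ncard) : IsMaxIndep G I :=
  ⟨hI, hcard.antisymm' hI.ncard_le_indepNum⟩

theorem indepNum_of_forall_not_adj (hG : ∀ a b, ¬ G.Adj a b) :
    _root_.indepNum G = Fintype.card V := by
  have huniv : _root_.IsIndepSet G Set.univ := fun a _ b _ _ => hG a b
  have hle := huniv.ncard_le_indepNum
  obtain ⟨I, -, hI⟩ := exists_isMaxIndep G
  have hge := Set.ncard_le_card I
  simp only [Set.ncard_univ, Nat.card_eq_fintype_card] at hle hge
  omega

theorem indepNum_avoid_leaf {ℓ p : V} (hadj : G.Adj ℓ p) (hleaf : ∀ w, G.Adj ℓ w → w = p) :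
    _root_.indepNum (avoid G {ℓ, p}) = _root_.indepNum G + 1 := by
  apply le_antisymm
  · obtain ⟨I, hI, hcard⟩ := exists_isMaxIndep (avoid G {ℓ, p})
    have hindep : _root_.IsIndepSet G (insert ℓ (I \ {ℓ, p})) :=
      hI.diff_of_avoid.insert fun b hb hℓb => hb.2 (by simp [hleaf b hℓb])
    have hℓ : ℓ ∉ I \ {ℓ, p} := fun h => h.2 (by simp)
    have hle := hindep.ncard_le_indepNum
    rw [Set.ncard_insert_of_notMem hℓ] at hle
    have hdiff := Set.le_ncard_sdiff {ℓ, p} I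
    rw [Set.ncard_pair (G.ne_of_adj hadj)] at hdiff
    omega
  · obtain ⟨I, hI, hcard⟩ := exists_isMaxIndep G
    obtain ⟨a, ha, hsub⟩ : ∃ a ∉ I, insert a I ⊆ I ∪ {ℓ, p} := by
      by_cases hℓ : ℓ ∈ I
      · exact ⟨p, fun hp => hI hℓ hp (G.ne_of_adj hadj) hadj,
          Set.insert_subset (by simp) Set.subset_union_left⟩
      · exact ⟨ℓ, hℓ, Set.insert_subset (by simp) Set.subset_union_left⟩
    have hle := Set.ncard_le_ncard hsub
    rw [Set.ncard_insert_of_notMem ha] at hle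
    have := (hI.avoid_union {ℓ, p}).ncard_le_indepNum
    omega

end IndependenceNumber

noncomputable section Nullity

open Module

variable {V : Type*} [Fintype V] {G : SimpleGraph V}

def adjKer (G : SimpleGraph V) : Submodule ℝ (V → ℝ) :=
  LinearMap.ker (G.adjMatrix ℝ).mulVecLin

def nullity (G : SimpleGraph V) : ℕ := finrank ℝ (adjKer G)

theorem mem_adjKer {x : V → ℝ} : x ∈ adjKer G ↔ G.adjMatrix ℝ *ᵥ x = 0 := Iff.rfl

theorem adjMatrix_avoid_mulVec {S : Set V} {x : V → ℝ}
    (hx : ∀ w ∉ S, ∀ z ∈ S, G.Adj w z → x z = 0) :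
    (avoid G S).adjMatrix ℝ *ᵥ x = Sᶜ.indicator (G.adjMatrix ℝ *ᵥ x) := by
  funext w
  by_cases hw : w ∈ S
  · simp only [Set.indicator_of_notMem (Set.notMem_compl_iff.mpr hw), mulVec, dotProduct,
      adjMatrix_apply]
    exact Finset.sum_eq_zero fun z _ => by simp [avoid, hw]
  · simp only [Set.indicator_of_mem (Set.mem_compl hw), mulVec, dotProduct, adjMatrix_apply]
    refine Finset.sum_congr rfl fun z _ => ?_
    by_cases hz : z ∈ S
    · by_cases hwz : G.Adj w z
      · simp [avoid, hz, hx w hw z hz hwz]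
      · simp [avoid, hwz]
    · simp [avoid, hw, hz]

theorem single_mem_adjKer_avoid {S : Set V} {a : V} (ha : a ∈ S) :
    Pi.single a 1 ∈ adjKer (avoid G S) := by
  rw [mem_adjKer, mulVec_single_one]
  funext w
  rw [col_apply, adjMatrix_apply, if_neg fun h => h.2.2 ha, Pi.zero_apply]

theorem nullity_of_forall_not_adj (hG : ∀ a b, ¬ G.Adj a b) : nullity G = Fintype.card V := by
  have hA : G.adjMatrix ℝ = 0 := by
    ext a b
    simp [hG a b]
  rw [nullity, adjKer, hA, mulVecLin_zero, LinearMap.ker_zero, finrank_top,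
    finrank_fintype_fun_eq_card]

theorem adjMatrix_mulVec_apply_leaf {ℓ p : V} (hadj : G.Adj ℓ p)
    (hleaf : ∀ w, G.Adj ℓ w → w = p) (x : V → ℝ) : (G.adjMatrix ℝ *ᵥ x) ℓ = x p := by
  have : G.neighborFinset ℓ = {p} := by
    ext w
    simpa using ⟨hleaf w, fun h => h ▸ hadj⟩
  rw [adjMatrix_mulVec_apply, this, Finset.sum_singleton]

/-- `y ↦ ((A y) ℓ, (A y) p)` maps `adjKer (avoid G {ℓ, p})` onto `ℝ²`, with kernel `adjKer G`. -/
theorem nullity_avoid_leaf {ℓ p : V} (hadj : G.Adj ℓ p) (hleaf : ∀ w, G.Adj ℓ w → w = p) :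
    nullity (avoid G {ℓ, p}) = nullity G + 2 := by
  rw [nullity, nullity]
  set K := adjKer (avoid G {ℓ, p})
  have hA : ∀ x : V → ℝ, x p = 0 →
      (avoid G {ℓ, p}).adjMatrix ℝ *ᵥ x = ({ℓ, p} : Set V)ᶜ.indicator (G.adjMatrix ℝ *ᵥ x) :=
    fun x hxp => adjMatrix_avoid_mulVec fun w hw z hz hwz => by
      rcases hz with rfl | rfl
      · exact absurd (by simp [hleaf w hwz.symm]) hw
      · exact hxp
  have hle : adjKer G ≤ K := fun x hx => by
    rw [mem_adjKer] at hx
    have hxp : x p = 0 := by rw [← adjMatrix_mulVec_apply_leaf hadj hleaf x, hx, Pi.zero_apply]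
    rw [mem_adjKer, hA x hxp, hx, Set.indicator_zero']
  let f : K →ₗ[ℝ] ℝ × ℝ :=
    (LinearMap.proj ℓ).prod (LinearMap.proj p) ∘ₗ (G.adjMatrix ℝ).mulVecLin ∘ₗ K.subtype
  have hf : ∀ y : K, f y = ((G.adjMatrix ℝ *ᵥ y) ℓ, (G.adjMatrix ℝ *ᵥ y) p) := fun _ => rfl
  have hker : LinearMap.ker f = (adjKer G).comap K.subtype := by
    ext y
    simp only [LinearMap.mem_ker, hf, Prod.mk_eq_zero, Submodule.mem_comap,
      Submodule.coe_subtype, mem_adjKer]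
    refine ⟨fun ⟨hℓ, hp⟩ => ?_, fun h => ⟨congrFun h ℓ, congrFun h p⟩⟩
    have hyp : (y : V → ℝ) p = 0 := by rwa [← adjMatrix_mulVec_apply_leaf hadj hleaf y]
    have hy := mem_adjKer.mp y.2
    rw [hA y hyp] at hy
    funext w
    by_cases hw : w ∈ ({ℓ, p} : Set V)
    · rcases hw with rfl | rfl
      exacts [hℓ, hp]
    · simpa [Set.indicator_of_mem (Set.mem_compl hw)] using congrFun hy w
  have hrange : LinearMap.range f = ⊤ := by
    refine LinearMap.range_eq_top.mpr fun c =>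
      ⟨c.1 • ⟨_, single_mem_adjKer_avoid (Set.mem_insert_of_mem ℓ rfl)⟩ +
        c.2 • ⟨_, single_mem_adjKer_avoid (Set.mem_insert ℓ {p})⟩, ?_⟩
    rw [map_add, map_smul, map_smul, hf, hf]
    simp [hadj, hadj.symm]
  have := LinearMap.finrank_range_add_finrank_ker f
  rw [hrange, hker, (Submodule.comapSubtypeEquivOfLe hle).finrank_eq, finrank_top,
    finrank_prod, finrank_self] at this
  omega

end Nullity

theorem SimpleGraph.IsAcyclic.exists_leaf {V : Type*} [Finite V] {G : SimpleGraph V}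
    (hG : G.IsAcyclic) {a b : V} (hab : G.Adj a b) :
    ∃ ℓ p, G.Adj ℓ p ∧ ∀ w, G.Adj ℓ w → w = p := by
  have : Nonempty V := ⟨a⟩
  obtain ⟨u, v, q, hq, hmax⟩ := Walk.exists_isPath_forall_isPath_length_le_length G
  have hnil : ¬ q.Nil := fun h => by
    simpa [h.length_eq_zero] using hmax a b _ (Walk.IsPath.of_adj hab)
  refine ⟨u, q.snd, q.adj_snd hnil, fun w hw => hG.eq_snd_of_adj_start hq hw ?_⟩
  by_contra hwq
  simpa using hmax w v (q.cons hw.symm) (hq.cons hwq)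

section Forest

variable {V : Type*} [Fintype V]

theorem two_mul_indepNum {G : SimpleGraph V} (hG : G.IsAcyclic) :
    2 * _root_.indepNum G = Fintype.card V + nullity G := by
  induction G using WellFoundedLT.induction with
  | _ G ih =>
    by_cases hedge : ∃ a b, G.Adj a b
    · obtain ⟨a, b, hab⟩ := hedge
      obtain ⟨ℓ, p, hadj, hleaf⟩ := hG.exists_leaf hab
      have hlt : avoid G {ℓ, p} < G :=
        lt_of_le_of_ne (fun _ _ h => h.1) fun h => (h ▸ hadj).2.1 (by simp)
      have := ih _ hlt (hG.anti hlt.le)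
      rw [indepNum_avoid_leaf hadj hleaf, nullity_avoid_leaf hadj hleaf] at this
      omega
    · simp only [not_exists] at hedge
      rw [indepNum_of_forall_not_adj hedge, nullity_of_forall_not_adj hedge]
      ring

theorem exists_isMaxIndep_notMem {G : SimpleGraph V} (hG : G.IsAcyclic) {w : V}
    (hw : w ∉ nullSupp G) : ∃ I, IsMaxIndep G I ∧ w ∉ I := by
  have hvanish : ∀ x ∈ adjKer G, x w = 0 := fun x hx => by
    by_contra h
    exact hw ⟨x, hx, h⟩
  have hlt : adjKer G < adjKer (avoid G {w}) := by
    refine lt_of_le_of_ne (fun x hx => ?_) fun h => ?_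
    · rw [mem_adjKer, adjMatrix_avoid_mulVec, mem_adjKer.mp hx, Set.indicator_zero']
      rintro _ _ z rfl _
      exact hvanish x hx
    · have := hvanish (Pi.single w 1) (by rw [h]; exact single_mem_adjKer_avoid rfl)
      simp at this
  have hη : nullity G < nullity (avoid G {w}) := Submodule.finrank_lt_finrank_of_lt hlt
  have hα := two_mul_indepNum hG
  have hα' := two_mul_indepNum (hG.anti fun _ _ h => h.1 : (avoid G {w}).IsAcyclic)
  obtain ⟨I, hI, hcard⟩ := exists_isMaxIndep (avoid G {w})
  refine ⟨I \ {w}, hI.diff_of_avoid.isMaxIndep ?_, fun h => h.2 rfl⟩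
  have := Set.le_ncard_sdiff {w} I
  rw [Set.ncard_singleton] at this
  omega

end Forest

section Branch

variable {V : Type*} {G : SimpleGraph V}

def branch (G : SimpleGraph V) (v u : V) : Set V :=
  {w | (G.deleteEdges {s(v, u)}).Reachable u w}

theorem mem_branch_self (v u : V) : u ∈ branch G v u := Reachable.refl u

theorem mem_branch_of_adj {v u a b : V} (ha : a ∈ branch G v u) (hab : G.Adj a b) (hb : b ≠ v) :
    b ∈ branch G v u := by
  by_cases he : s(a, b) = s(v, u)
  · rcases Sym2.eq_iff.mp he with ⟨-, rfl⟩ | ⟨-, rfl⟩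
    exacts [mem_branch_self v b, absurd rfl hb]
  · exact ha.trans (Adj.reachable (by simp [hab, he]))

theorem SimpleGraph.IsAcyclic.mem_branch_iff {v u z : V} (hG : G.IsAcyclic) (hvu : G.Adj v u)
    (hvz : G.Adj v z) : z ∈ branch G v u ↔ z = u := by
  refine ⟨fun hz => by_contra fun hne => ?_, fun h => h ▸ mem_branch_self (G := G) v u⟩
  have hzv : (G.deleteEdges {s(v, u)}).Adj z v := by simp [hvz.symm, hne, hvu.ne]
  exact isBridge_iff.mp (isAcyclic_iff_forall_adj_isBridge.mp hG hvu) (hz.trans hzv.reachable).symm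

end Branch

section Exchange

variable {V : Type*} [Fintype V] {G : SimpleGraph V}

/-- The two exchanged sets `(I \ S) ∪ (J ∩ S)` and `(J \ S) ∪ (I ∩ S)` are independent and
their sizes add up to `2 α`. -/
theorem IsMaxIndep.diff_union_inter {I J S : Set V} {v : V} (hI : IsMaxIndep G I)
    (hJ : IsMaxIndep G J) (hvI : v ∉ I) (hvJ : v ∉ J)
    (hS : ∀ a ∈ S, ∀ b, G.Adj a b → b ≠ v → b ∈ S) : IsMaxIndep G ((I \ S) ∪ (J ∩ S)) := by
  have hX := hI.1.diff_union_inter hJ.1 hvI hS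
  have hY := (hJ.1.diff_union_inter hI.1 hvJ hS).ncard_le_indepNum
  have hdisj : ∀ K L : Set V, Disjoint (K \ S) (L ∩ S) := fun _ _ =>
    Set.disjoint_sdiff_left.mono_right Set.inter_subset_right
  rw [Set.ncard_union_eq (hdisj J I)] at hY
  refine hX.isMaxIndep ?_
  rw [Set.ncard_union_eq (hdisj I J)]
  have hI' := Set.ncard_inter_add_ncard_sdiff_eq_ncard I S
  have hJ' := Set.ncard_inter_add_ncard_sdiff_eq_ncard J S
  have hIα := hI.2
  have hJα := hJ.2
  omega

theorem exists_isMaxIndep_mem (hG : G.IsAcyclic) {v : V}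
    (h : ∀ u, G.Adj v u → ∃ J, IsMaxIndep G J ∧ u ∉ J) : ∃ I, IsMaxIndep G I ∧ v ∈ I := by
  by_contra! hv
  obtain ⟨I, hI, hmin⟩ := Set.exists_min_image {I | IsMaxIndep G I}
    (fun I => (I ∩ G.neighborSet v).ncard) (Set.toFinite _) (exists_isMaxIndep G)
  by_cases hN : (I ∩ G.neighborSet v).Nonempty
  · obtain ⟨u, huI, hvu⟩ := hN
    obtain ⟨J, hJ, huJ⟩ := h u hvu
    have hswap := hI.diff_union_inter (S := branch G v u) hJ (hv I hI) (hv J hJ)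
      fun _ ha _ => mem_branch_of_adj ha
    have hN' : ((I \ branch G v u) ∪ (J ∩ branch G v u)) ∩ G.neighborSet v
        = (I ∩ G.neighborSet v) \ {u} := by
      ext z
      by_cases hvz : G.Adj v z
      · have := hG.mem_branch_iff hvu hvz
        by_cases hzu : z = u <;> simp_all
      · simp [hvz]
    have := hmin _ hswap
    have huN : u ∈ I ∩ G.neighborSet v := ⟨huI, hvu⟩
    simp only [hN', Set.ncard_sdiff_singleton_of_mem huN] at this
    have : 0 < (I ∩ G.neighborSet v).ncard := (Set.ncard_pos).mpr ⟨u, huN⟩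
    omega
  · have hindep := hI.1.insert fun b hb hvb => hN ⟨b, hb, hvb⟩
    have := hindep.ncard_le_indepNum
    rw [Set.ncard_insert_of_notMem (hv I hI), hI.2] at this
    omega

end Exchange

theorem fn_vertex_maxIndep {V : Type*} [Fintype V] (G : SimpleGraph V) (hT : G.IsTree)
    (v : V) (hv : v ∈ fnVerts G) :
    ∃ I₁ I₂ : Set V, IsMaxIndep G I₁ ∧ IsMaxIndep G I₂ ∧ v ∈ I₁ ∧ v ∉ I₂ := by
  simp only [fnVerts, Set.mem_compl_iff, Set.mem_union, not_or] at hv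
  obtain ⟨hvS, hvC⟩ := hv
  have hN : ∀ u, G.Adj v u → u ∉ nullSupp G := fun u hu huS =>
    hvC (Set.mem_biUnion huS hu.symm)
  obtain ⟨I₁, hI₁, hvI₁⟩ :=
    exists_isMaxIndep_mem hT.isAcyclic fun u hu => exists_isMaxIndep_notMem hT.isAcyclic (hN u hu)
  obtain ⟨I₂, hI₂, hvI₂⟩ := exists_isMaxIndep_notMem hT.isAcyclic hvS
  exact ⟨I₁, I₂, hI₁, hI₂, hvI₁, hvI₂⟩
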